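/- Let G be a directed graph. The affine zero locus Z(G) of the incidence ideal is a ℂ-submodule of ℂ^{E(G)} if and only if the number of distinct directed cycles in G equals α(G). -/

import Mathlib

open MvPolynomial

/-- The `l`-th elementary symmetric polynomial in the finite set `s` of variables
(`1` for `l = 0`, `0` for `l > |s|`). -/
noncomputable def esymmOf (R : Type) [CommRing R] {E : Type} (s : Finset E) (l : ℕ) :
    MvPolynomial E R :=
  ∑ t ∈ s.powersetCard l, ∏ x ∈ t, X x

/-- The incidence ideal of the directed graph with edge-endpoint maps `src`, `tgt`:
the ideal generated by the incidence relations
`δ_{v,l} = e_l(edges out of v) - e_l(edges into v)` for all vertices `v` and all `l ≥ 1`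
(for `l > k_v` the relation `δ_{v,l}` is the zero polynomial, so this ideal is generated by
the `δ_{v,l}` with `1 ≤ l ≤ k_v`). -/
noncomputable def incidenceIdeal (R : Type) [CommRing R] {V E : Type}
    [Fintype E] [DecidableEq V] (src tgt : E → V) : Ideal (MvPolynomial E R) :=
  Ideal.span {f | ∃ (v : V) (l : ℕ), 1 ≤ l ∧
    f = esymmOf R (Finset.univ.filter fun x => src x = v) l
      - esymmOf R (Finset.univ.filter fun x => tgt x = v) l}

/-- The affine zero locus in `ℂ^E` of an ideal of `ℤ[E]`. -/
def zeroLocus {E : Type} (I : Ideal (MvPolynomial E ℤ)) : Set (E → ℂ) :=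
  {p | ∀ f ∈ I, MvPolynomial.aeval p f = 0}

/-- A directed cycle in the directed graph with edge-endpoint maps `src`, `tgt`:
pairwise distinct vertices `v_0, …, v_n` and edges `x_0, …, x_n` with `x_i` going
from `v_i` to `v_{i+1}` (indices mod `n+1`). -/
structure DirCycle {V E : Type} (src tgt : E → V) where
  n : ℕ
  vtx : ZMod (n + 1) → V
  edge : ZMod (n + 1) → E
  vtx_inj : Function.Injective vtx
  edge_src : ∀ i, src (edge i) = vtx i
  edge_tgt : ∀ i, tgt (edge i) = vtx (i + 1)

/-- `C` is the set of edges of a directed cycle.  (A directed cycle, considered up to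
cyclic permutation, is uniquely determined by its set of edges.) -/
def IsCycle {V E : Type} (src tgt : E → V) (C : Set E) : Prop :=
  ∃ c : DirCycle src tgt, C = Set.range c.edge

/-- `α(G)`: the maximal number of pairwise edge-disjoint directed cycles. -/
noncomputable def cyclePacking {V E : Type} (src tgt : E → V) : ℕ :=
  sSup {k | ∃ f : Fin k → Set E, (∀ i, IsCycle src tgt (f i)) ∧
    ∀ i j, i ≠ j → Disjoint (f i) (f j)}

/-!
A point `p` lies on `Z(G)` iff at every vertex the nonzero values of `p` on the outgoing and on
the incoming edges form the same multiset (the `e_l` with `l ≥ 1` determine a multiset up to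
zeros), i.e. iff every nonzero level set of `p` is an Eulerian edge set. Subtracting multiples of
indicators of cycles contained in such level sets shows that `Z(G)` always lies in the span of the
cycle indicators, and each cycle indicator lies in `Z(G)`.

If two distinct cycles `C, C'` share an edge, the level set of `1_C + 1_C'` at `2` is `C ∩ C'`, a
nonempty Eulerian proper subset of one of the cycles, which is impossible: `Z(G)` is not closed
under addition. If distinct cycles are edge-disjoint, every element of the span is constant on
each cycle and vanishes off their union, so its level sets are disjoint unions of cycles and `Z(G)`
is the span. Finally, distinct cycles are pairwise edge-disjoint exactly when the family of all
cycles is a packing, i.e. when the number of cycles is `α(G)`.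
-/

namespace Multiset

variable {R : Type*}

section CommSemiring

variable [CommSemiring R]

@[simp]
theorem esymm_zero (s : Multiset R) : s.esymm 0 = 1 := by
  simp [esymm]

theorem esymm_cons_succ (a : R) (s : Multiset R) (n : ℕ) :
    (a ::ₘ s).esymm (n + 1) = s.esymm (n + 1) + a * s.esymm n := by
  simp only [esymm, powersetCard_cons, map_add, sum_add, map_map, Function.comp_def, prod_cons,
    sum_map_mul_left]

theorem esymm_eq_zero_of_card_lt (s : Multiset R) {n : ℕ} (h : card s < n) : s.esymm n = 0 := by
  simp [esymm, powersetCard_eq_empty _ h]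

theorem esymm_card (s : Multiset R) : s.esymm (card s) = s.prod := by
  simp [esymm, powersetCard_self]

theorem esymm_filter_ne_zero [DecidableEq R] (s : Multiset R) {n : ℕ} (hn : n ≠ 0) :
    (s.filter (· ≠ 0)).esymm n = s.esymm n := by
  induction s using Multiset.induction_on generalizing n with
  | empty => rfl
  | cons a s ih =>
    obtain ⟨n, rfl⟩ := Nat.exists_eq_succ_of_ne_zero hn
    by_cases ha : a = 0
    · rw [filter_cons_of_neg (p := (· ≠ 0)) _ (not_not.mpr ha), ha, esymm_cons_succ, zero_mul,
        add_zero, ih n.succ_ne_zero]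
    · rw [filter_cons_of_pos (p := (· ≠ 0)) _ ha, esymm_cons_succ, esymm_cons_succ,
        ih n.succ_ne_zero]
      rcases eq_or_ne n 0 with rfl | hn
      · simp
      · rw [ih hn]

end CommSemiring

variable [CommRing R] [IsDomain R]

theorem eq_of_card_eq_of_esymm_eq {s t : Multiset R} (hcard : card s = card t)
    (h : ∀ n, s.esymm n = t.esymm n) : s = t := by
  rw [← Polynomial.roots_multiset_prod_X_sub_C s, ← Polynomial.roots_multiset_prod_X_sub_C t,
    prod_X_sub_X_eq_sum_esymm, prod_X_sub_X_eq_sum_esymm, hcard]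
  simp_rw [h]

theorem card_le_of_esymm_eq {s t : Multiset R} (hs : (0 : R) ∉ s)
    (h : ∀ n ≠ 0, s.esymm n = t.esymm n) : card s ≤ card t := by
  by_contra! hlt
  have hs' : s.esymm (card s) ≠ 0 := by rw [esymm_card]; exact prod_ne_zero hs
  exact hs' (by rw [h _ (by omega), esymm_eq_zero_of_card_lt t hlt])

theorem filter_ne_zero_eq_iff_esymm_eq [DecidableEq R] {s t : Multiset R} :
    s.filter (· ≠ 0) = t.filter (· ≠ 0) ↔ ∀ n ≠ 0, s.esymm n = t.esymm n := by
  refine ⟨fun h n hn => ?_, fun h => ?_⟩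
  · rw [← esymm_filter_ne_zero s hn, h, esymm_filter_ne_zero t hn]
  have h' : ∀ n ≠ 0, (s.filter (· ≠ 0)).esymm n = (t.filter (· ≠ 0)).esymm n := fun n hn => by
    rw [esymm_filter_ne_zero s hn, esymm_filter_ne_zero t hn, h n hn]
  have hzero : ∀ u : Multiset R, (0 : R) ∉ u.filter (· ≠ 0) := fun u hu =>
    (mem_filter.mp hu).2 rfl
  refine eq_of_card_eq_of_esymm_eq
    ((card_le_of_esymm_eq (hzero s) h').antisymm
      (card_le_of_esymm_eq (hzero t) fun n hn => (h' n hn).symm)) fun n => ?_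
  rcases eq_or_ne n 0 with rfl | hn
  · simp
  · exact h' n hn

end Multiset

theorem Function.exists_mem_periodicPts {α : Type*} [Finite α] [Nonempty α] (f : α → α) :
    ∃ x, x ∈ Function.periodicPts f := by
  obtain ⟨x⟩ := ‹Nonempty α›
  obtain ⟨a, b, hab, heq⟩ := Finite.exists_ne_map_eq_of_infinite fun n => f^[n] x
  wlog hlt : a < b generalizing a b
  · exact this b a hab.symm heq.symm (by omega)
  refine ⟨f^[a] x, Function.mk_mem_periodicPts (n := b - a) (by omega) ?_⟩
  rw [Function.IsPeriodicPt, Function.IsFixedPt, ← Function.iterate_add_apply,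
    Nat.sub_add_cancel hlt.le, heq]

open Set

section DirectedGraph

variable {V E : Type} {src tgt : E → V} {K : Type*}

def IsEulerian (src tgt : E → V) (S : Set E) : Prop :=
  ∀ v, {e ∈ S | src e = v}.ncard = {e ∈ S | tgt e = v}.ncard

theorem isEulerian_empty : IsEulerian src tgt ∅ := by
  simp [IsEulerian]

theorem IsEulerian.diff [Finite E] {S T : Set E} (hS : IsEulerian src tgt S)
    (hT : IsEulerian src tgt T) (hTS : T ⊆ S) : IsEulerian src tgt (S \ T) := by
  have hsep : ∀ f : E → V, ∀ v,
      {e ∈ S \ T | f e = v} = {e ∈ S | f e = v} \ {e ∈ T | f e = v} :=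
    fun f v => by ext e; simp only [mem_sdiff, mem_ofPred_eq]; tauto
  have hsub : ∀ f : E → V, ∀ v, {e ∈ T | f e = v} ⊆ {e ∈ S | f e = v} :=
    fun f v e he => ⟨hTS he.1, he.2⟩
  intro v
  rw [hsep, hsep, ncard_sdiff (hsub _ _), ncard_sdiff (hsub _ _), hS, hT]

theorem isEulerian_biUnion [Finite E] {ι : Type*} {t : Set ι} (ht : t.Finite) {s : ι → Set E}
    (hd : t.PairwiseDisjoint s) (hs : ∀ i ∈ t, IsEulerian src tgt (s i)) :
    IsEulerian src tgt (⋃ i ∈ t, s i) := by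
  have hsep : ∀ f : E → V, ∀ v,
      {e ∈ ⋃ i ∈ t, s i | f e = v} = ⋃ i ∈ t, {e ∈ s i | f e = v} :=
    fun f v => by ext e; simp only [mem_ofPred_eq, mem_iUnion, exists_prop]; tauto
  have hd' : ∀ f : E → V, ∀ v, t.PairwiseDisjoint fun i => {e ∈ s i | f e = v} :=
    fun f v => hd.mono fun i => sep_subset _ _
  intro v
  rw [hsep, hsep, ht.ncard_biUnion (fun _ _ => toFinite _) (hd' src v),
    ht.ncard_biUnion (fun _ _ => toFinite _) (hd' tgt v)]
  exact finsum_mem_congr rfl fun i hi => hs i hi v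

theorem IsEulerian.image_tgt_subset [Finite E] {S : Set E} (hS : IsEulerian src tgt S) :
    tgt '' S ⊆ src '' S := by
  rintro _ ⟨e, he, rfl⟩
  have hin : {e' ∈ S | tgt e' = tgt e}.Nonempty := ⟨e, he, rfl⟩
  rw [← ncard_pos, ← hS] at hin
  obtain ⟨e', he', hsrc⟩ := nonempty_of_ncard_ne_zero hin.ne'
  exact ⟨e', he', hsrc⟩

namespace DirCycle

theorem edge_injective (c : DirCycle src tgt) : Function.Injective c.edge := fun i j h =>
  c.vtx_inj (by rw [← c.edge_src, ← c.edge_src, h])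

theorem isEulerian [Finite E] (c : DirCycle src tgt) : IsEulerian src tgt (range c.edge) := by
  intro v
  have hsrc : {e ∈ range c.edge | src e = v} = c.edge '' {i | c.vtx i = v} := by
    ext e
    constructor
    · rintro ⟨⟨i, rfl⟩, rfl⟩
      exact ⟨i, (c.edge_src i).symm, rfl⟩
    · rintro ⟨i, rfl, rfl⟩
      exact ⟨⟨i, rfl⟩, c.edge_src i⟩
  have htgt : {e ∈ range c.edge | tgt e = v} = c.edge '' ((· + 1) ⁻¹' {i | c.vtx i = v}) := by
    ext e
    constructor
    · rintro ⟨⟨i, rfl⟩, rfl⟩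
      exact ⟨i, (c.edge_tgt i).symm, rfl⟩
    · rintro ⟨i, hi, rfl⟩
      exact ⟨⟨i, rfl⟩, (c.edge_tgt i).trans hi⟩
  rw [hsrc, htgt, ncard_image_of_injective _ c.edge_injective,
    ncard_image_of_injective _ c.edge_injective,
    ncard_preimage_of_injective_subset_range (add_left_injective (1 : ZMod (c.n + 1)))
      fun i _ => ⟨i - 1, sub_add_cancel i 1⟩]

theorem eq_of_isEulerian_subset [Finite E] (c : DirCycle src tgt) {T : Set E}
    (hT : IsEulerian src tgt T) (hTc : T ⊆ range c.edge) (hne : T.Nonempty) :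
    T = range c.edge := by
  have hsucc : ∀ i, c.edge i ∈ T → c.edge (i + 1) ∈ T := by
    intro i hi
    obtain ⟨e, he, hsrc⟩ := hT.image_tgt_subset ⟨_, hi, rfl⟩
    obtain ⟨j, rfl⟩ := hTc he
    rwa [← c.vtx_inj (by rw [← c.edge_src, hsrc, c.edge_tgt] : c.vtx j = c.vtx (i + 1))]
  obtain ⟨_, hi₀⟩ := hne
  obtain ⟨i₀, rfl⟩ := hTc hi₀
  have hiter : ∀ m : ℕ, c.edge (i₀ + m) ∈ T := by
    intro m
    induction m with
    | zero => simpa using hi₀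
    | succ m ih => simpa [add_assoc] using hsucc _ ih
  refine hTc.antisymm ?_
  rintro _ ⟨j, rfl⟩
  simpa using hiter (j - i₀).val

end DirCycle

theorem IsCycle.nonempty {C : Set E} (hC : IsCycle src tgt C) : C.Nonempty := by
  obtain ⟨c, rfl⟩ := hC
  exact range_nonempty _

theorem IsCycle.isEulerian [Finite E] {C : Set E} (hC : IsCycle src tgt C) :
    IsEulerian src tgt C := by
  obtain ⟨c, rfl⟩ := hC
  exact c.isEulerian

/-- Choose one edge of `S` out of each vertex of `src '' S`; a periodic point of the induced map
on these vertices traces out the cycle. -/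
theorem exists_dirCycle_subset {S : Set E} (hfin : S.Finite) (hne : S.Nonempty)
    (hS : tgt '' S ⊆ src '' S) : ∃ c : DirCycle src tgt, range c.edge ⊆ S := by
  have : Finite (src '' S) := (hfin.image src).to_subtype
  have : Nonempty (src '' S) := (hne.image src).to_subtype
  choose out hout hsrc using fun w : src '' S => w.2
  let φ : src '' S → src '' S := fun w => ⟨tgt (out w), hS ⟨_, hout w, rfl⟩⟩
  obtain ⟨x, hx⟩ := Function.exists_mem_periodicPts φ
  obtain ⟨n, hn⟩ : ∃ n, Function.minimalPeriod φ x = n + 1 :=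
    Nat.exists_eq_succ_of_ne_zero (Function.minimalPeriod_pos_of_mem_periodicPts hx).ne'
  have hlt : ∀ i : ZMod (n + 1), i.val ∈ Iio (Function.minimalPeriod φ x) := fun i => by
    simpa [hn] using ZMod.val_lt i
  refine ⟨⟨n, fun i => φ^[i.val] x, fun i => out (φ^[i.val] x), ?_, fun i => hsrc _, ?_⟩, ?_⟩
  · intro i j hij
    exact ZMod.val_injective _
      (Function.iterate_injOn_Iio_minimalPeriod (hlt i) (hlt j) (Subtype.ext hij))
  · intro i
    have hmod : ∀ m, φ^[m % (n + 1)] x = φ^[m] x := fun m =>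
      hn ▸ Function.iterate_mod_minimalPeriod_eq
    rw [ZMod.val_add, ZMod.val_one_eq_one_mod, Nat.add_mod_mod, hmod,
      Function.iterate_succ_apply']
  · rintro _ ⟨i, rfl⟩
    exact hout _

def IsBalanced (src tgt : E → V) [Zero K] (p : E → K) : Prop :=
  ∀ a ≠ 0, IsEulerian src tgt {e | p e = a}

theorem aeval_esymmOf {R S : Type} [CommRing R] [CommRing S] [Algebra R S] (p : E → S)
    (s : Finset E) (l : ℕ) : MvPolynomial.aeval p (esymmOf R s l) = (s.val.map p).esymm l := by
  simp [esymmOf, Finset.esymm_map_val, map_sum, map_prod]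

theorem mem_zeroLocus_span_iff {S : Set (MvPolynomial E ℤ)} {p : E → ℂ} :
    p ∈ zeroLocus (Ideal.span S) ↔ ∀ f ∈ S, MvPolynomial.aeval p f = 0 :=
  ⟨fun h f hf => h f (Ideal.subset_span hf),
    fun h _ hf => Ideal.span_le.mpr (fun f hf => RingHom.mem_ker.mpr (h f hf)) hf⟩

theorem count_map_filter_eq_ncard [Fintype E] [DecidableEq V] [DecidableEq K] (f : E → V)
    (p : E → K) (v : V) (a : K) :
    ((Finset.univ.filter fun e => f e = v).val.map p).count a
      = {e ∈ {e | p e = a} | f e = v}.ncard := by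
  rw [Multiset.count_map, ← Finset.filter_val, ← Finset.card_def, ← ncard_coe_finset]
  congr 1
  ext e
  simp [eq_comm, and_comm]

theorem mem_zeroLocus_iff_isBalanced [Fintype E] [DecidableEq V] (p : E → ℂ) :
    p ∈ zeroLocus (incidenceIdeal ℤ src tgt) ↔ IsBalanced src tgt p := by
  let vals : (E → V) → V → Multiset ℂ := fun f v =>
    (Finset.univ.filter fun e => f e = v).val.map p
  calc p ∈ zeroLocus (incidenceIdeal ℤ src tgt)
      ↔ ∀ v, ∀ l ≠ 0, (vals src v).esymm l = (vals tgt v).esymm l := by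
        rw [incidenceIdeal, mem_zeroLocus_span_iff]
        refine ⟨fun h v l hl => ?_, ?_⟩
        · have := h _ ⟨v, l, Nat.one_le_iff_ne_zero.mpr hl, rfl⟩
          rwa [map_sub, aeval_esymmOf, aeval_esymmOf, sub_eq_zero] at this
        · rintro h _ ⟨v, l, hl, rfl⟩
          rw [map_sub, aeval_esymmOf, aeval_esymmOf, sub_eq_zero]
          exact h v l (Nat.one_le_iff_ne_zero.mp hl)
    _ ↔ ∀ v, (vals src v).filter (· ≠ 0) = (vals tgt v).filter (· ≠ 0) :=
        forall_congr' fun v => Multiset.filter_ne_zero_eq_iff_esymm_eq.symm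
    _ ↔ ∀ v, ∀ a ≠ 0, (vals src v).count a = (vals tgt v).count a := by
        simp only [Multiset.ext, Multiset.count_filter]
        exact forall_congr' fun v => forall_congr' fun a => by by_cases ha : a = 0 <;> simp [ha]
    _ ↔ IsBalanced src tgt p := by
        simp only [vals, count_map_filter_eq_ncard, IsBalanced, IsEulerian]
        exact forall_comm.trans (forall_congr' fun a => forall_comm)

def cycleIndicators (src tgt : E → V) (K : Type*) [Zero K] [One K] : Set (E → K) :=
  (fun C => C.indicator 1) '' {C | IsCycle src tgt C}

theorem DirCycle.isBalanced_indicator [Finite E] [Zero K] (c : DirCycle src tgt) (a : K) :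
    IsBalanced src tgt ((range c.edge).indicator fun _ => a) := by
  intro b hb
  by_cases hab : a = b
  · subst hab
    convert c.isEulerian using 1
    ext e
    by_cases he : e ∈ range c.edge
    · simp only [mem_ofPred_eq, indicator_of_mem he, he]
    · simp only [mem_ofPred_eq, indicator_of_notMem he, he, iff_false]
      exact hb.symm
  · convert (isEulerian_empty : IsEulerian src tgt ∅) using 1
    ext e
    by_cases he : e ∈ range c.edge
    · simp only [mem_ofPred_eq, indicator_of_mem he, hab, mem_empty_iff_false]
    · simp only [mem_ofPred_eq, indicator_of_notMem he, mem_empty_iff_false, iff_false]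
      exact hb.symm

theorem IsBalanced.indicator_compl [Finite E] [Zero K] {p : E → K}
    (hp : IsBalanced src tgt p) (c : DirCycle src tgt) {a : K}
    (hc : range c.edge ⊆ {e | p e = a}) : IsBalanced src tgt ((range c.edge)ᶜ.indicator p) := by
  intro b hb
  have hlevel : {e | (range c.edge)ᶜ.indicator p e = b} = {e | p e = b} \ range c.edge := by
    ext e
    by_cases he : e ∈ range c.edge
    · simp only [mem_ofPred_eq, mem_sdiff, indicator_of_notMem (notMem_compl_iff.mpr he), he,
        not_true_eq_false, and_false, iff_false]
      exact hb.symm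
    · simp only [mem_ofPred_eq, mem_sdiff, indicator_of_mem (mem_compl he), he,
        not_false_eq_true, and_true]
  rw [hlevel]
  by_cases hab : a = b
  · subst hab
    exact (hp a hb).diff c.isEulerian hc
  · convert hp b hb using 1
    exact sdiff_eq_left.mpr (disjoint_left.mpr fun e hpe he => hab ((hc he).symm.trans hpe))

theorem IsBalanced.mem_span_cycleIndicators [Finite E] [Field K] {p : E → K}
    (hp : IsBalanced src tgt p) : p ∈ Submodule.span K (cycleIndicators src tgt K) := by
  induction hn : (Function.support p).ncard using Nat.strong_induction_on generalizing p with
  | _ n ih =>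
  by_cases hp0 : p = 0
  · rw [hp0]
    exact Submodule.zero_mem _
  obtain ⟨e₀, he₀⟩ := Function.ne_iff.mp hp0
  obtain ⟨c, hc⟩ := exists_dirCycle_subset (S := {e | p e = p e₀}) (toFinite _) ⟨e₀, rfl⟩
    (hp _ he₀).image_tgt_subset
  have hdecomp : p = (range c.edge)ᶜ.indicator p + p e₀ • (range c.edge).indicator 1 := by
    ext e
    by_cases he : e ∈ range c.edge
    · simp only [Pi.add_apply, Pi.smul_apply, indicator_of_notMem (notMem_compl_iff.mpr he),
        indicator_of_mem he, Pi.one_apply, smul_eq_mul, mul_one, zero_add]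
      exact hc he
    · simp only [Pi.add_apply, Pi.smul_apply, indicator_of_mem (mem_compl he),
        indicator_of_notMem he, smul_zero, add_zero]
  have hlt : (Function.support ((range c.edge)ᶜ.indicator p)).ncard < n := by
    rw [← hn, support_indicator]
    refine ncard_lt_ncard ((ssubset_iff_of_subset inter_subset_right).mpr ⟨c.edge 0, ?_, ?_⟩)
    · exact (hc (mem_range_self 0)).trans_ne he₀
    · exact fun h => h.1 (mem_range_self 0)
  rw [hdecomp]
  exact add_mem (ih _ hlt (hp.indicator_compl c hc) rfl)
    (Submodule.smul_mem _ _ (Submodule.subset_span ⟨_, ⟨c, rfl⟩, rfl⟩))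

theorem forall_eq_of_mem_span_cycleIndicators [Field K]
    (hpd : {C | IsCycle src tgt C}.PairwiseDisjoint id) {p : E → K}
    (hp : p ∈ Submodule.span K (cycleIndicators src tgt K)) :
    (∀ C, IsCycle src tgt C → ∀ e ∈ C, ∀ e' ∈ C, p e = p e') ∧
      ∀ e, p e ≠ 0 → ∃ C, IsCycle src tgt C ∧ e ∈ C := by
  induction hp using Submodule.span_induction with
  | mem q hq =>
    obtain ⟨C, hC, rfl⟩ := hq
    refine ⟨fun C' hC' e he e' he' => ?_, fun e he => ⟨C, hC, ?_⟩⟩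
    · rcases eq_or_ne C C' with rfl | hne
      · simp [he, he']
      · have hd : Disjoint C C' := hpd hC hC' hne
        simp [indicator_of_notMem (hd.notMem_of_mem_right he),
          indicator_of_notMem (hd.notMem_of_mem_right he')]
    · by_contra h
      exact he (indicator_of_notMem h _)
  | zero => simp
  | add q r _ _ hq hr =>
    refine ⟨fun C hC e he e' he' => ?_, fun e he => ?_⟩
    · simp [hq.1 C hC e he e' he', hr.1 C hC e he e' he']
    · by_cases hqe : q e = 0
      · exact hr.2 e (by simpa [hqe] using he)
      · exact hq.2 e hqe
  | smul a q _ hq =>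
    exact ⟨fun C hC e he e' he' => by simp [hq.1 C hC e he e' he'],
      fun e he => hq.2 e (right_ne_zero_of_mul he)⟩

theorem isBalanced_of_mem_span_cycleIndicators [Finite E] [Field K]
    (hpd : {C | IsCycle src tgt C}.PairwiseDisjoint id) {p : E → K}
    (hp : p ∈ Submodule.span K (cycleIndicators src tgt K)) : IsBalanced src tgt p := by
  obtain ⟨hconst, hsupp⟩ := forall_eq_of_mem_span_cycleIndicators hpd hp
  intro b hb
  have hlevel : {e | p e = b} = ⋃ C ∈ {C | IsCycle src tgt C ∧ C ⊆ {e | p e = b}}, C := by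
    refine Subset.antisymm (fun e he => ?_) (iUnion₂_subset fun C hC => hC.2)
    obtain ⟨C, hC, heC⟩ := hsupp e (by rwa [← he] at hb)
    exact mem_biUnion ⟨hC, fun e' he' => (hconst C hC e' he' e heC).trans he⟩ heC
  rw [hlevel]
  exact isEulerian_biUnion (toFinite _) (hpd.subset fun C hC => hC.1)
    fun C hC => hC.1.isEulerian

theorem IsCycle.eq_of_isBalanced_indicator_add [Finite E] [AddMonoidWithOne K] [CharZero K]
    {C C' : Set E} (hC : IsCycle src tgt C) (hC' : IsCycle src tgt C')
    (h : IsBalanced src tgt (C.indicator 1 + C'.indicator 1 : E → K))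
    (hCC' : (C ∩ C').Nonempty) : C = C' := by
  have hlevel : {e | (C.indicator 1 + C'.indicator 1 : E → K) e = 2} = C ∩ C' := by
    ext e
    by_cases he : e ∈ C <;> by_cases he' : e ∈ C' <;> simp [he, he', one_add_one_eq_two]
  have hE : IsEulerian src tgt (C ∩ C') := hlevel ▸ h 2 two_ne_zero
  obtain ⟨c, rfl⟩ := hC
  obtain ⟨c', rfl⟩ := hC'
  exact (c.eq_of_isEulerian_subset hE inter_subset_left hCC').symm.trans
    (c'.eq_of_isEulerian_subset hE inter_subset_right hCC')

theorem exists_submodule_eq_zeroLocus_iff [Fintype E] [DecidableEq V] :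
    (∃ L : Submodule ℂ (E → ℂ), zeroLocus (incidenceIdeal ℤ src tgt) = (L : Set (E → ℂ)))
      ↔ {C | IsCycle src tgt C}.PairwiseDisjoint id := by
  constructor
  · rintro ⟨L, hL⟩ C hC C' hC' hne
    have hmem : ∀ {C}, IsCycle src tgt C → C.indicator 1 ∈ L := by
      rintro _ ⟨c, rfl⟩
      rw [← SetLike.mem_coe, ← hL, mem_zeroLocus_iff_isBalanced]
      exact c.isBalanced_indicator 1
    have hsum := L.add_mem (hmem hC) (hmem hC')
    rw [← SetLike.mem_coe, ← hL, mem_zeroLocus_iff_isBalanced] at hsum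
    exact disjoint_iff_inter_eq_empty.mpr <| not_nonempty_iff_eq_empty.mp fun hCC' =>
      hne (hC.eq_of_isBalanced_indicator_add hC' hsum hCC')
  · intro hpd
    refine ⟨Submodule.span ℂ (cycleIndicators src tgt ℂ), ?_⟩
    ext p
    rw [mem_zeroLocus_iff_isBalanced, SetLike.mem_coe]
    exact ⟨IsBalanced.mem_span_cycleIndicators, isBalanced_of_mem_span_cycleIndicators hpd⟩

section Packing

variable {k : ℕ} {f : Fin k → Set E}

theorem injective_of_pairwise_disjoint_cycles (hf : ∀ i, IsCycle src tgt (f i))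
    (hd : ∀ i j, i ≠ j → Disjoint (f i) (f j)) : Function.Injective f := by
  intro i j hij
  by_contra hne
  have hempty := hd i j hne
  rw [hij, disjoint_self, bot_eq_empty] at hempty
  exact (hf j).nonempty.ne_empty hempty

theorem le_ncard_cycles_of_pairwise_disjoint [Finite E] (hf : ∀ i, IsCycle src tgt (f i))
    (hd : ∀ i j, i ≠ j → Disjoint (f i) (f j)) : k ≤ {C | IsCycle src tgt C}.ncard := by
  calc k = (range f).ncard := by
        rw [ncard_range_of_injective (injective_of_pairwise_disjoint_cycles hf hd), Nat.card_fin]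
    _ ≤ _ := ncard_le_ncard (range_subset_iff.mpr hf)

theorem ncard_cycles_eq_cyclePacking_iff [Finite E] :
    {C | IsCycle src tgt C}.ncard = cyclePacking src tgt
      ↔ {C | IsCycle src tgt C}.PairwiseDisjoint id := by
  have hbdd : BddAbove {k | ∃ f : Fin k → Set E, (∀ i, IsCycle src tgt (f i)) ∧
      ∀ i j, i ≠ j → Disjoint (f i) (f j)} :=
    ⟨_, fun _ ⟨_, hf, hd⟩ => le_ncard_cycles_of_pairwise_disjoint hf hd⟩
  have hzero : 0 ∈ {k | ∃ f : Fin k → Set E, (∀ i, IsCycle src tgt (f i)) ∧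
      ∀ i j, i ≠ j → Disjoint (f i) (f j)} :=
    ⟨Fin.elim0, fun i => i.elim0, fun i => i.elim0⟩
  constructor
  · intro h
    obtain ⟨f, hf, hd⟩ := Nat.sSup_mem ⟨0, hzero⟩ hbdd
    have hrange : range f = {C | IsCycle src tgt C} :=
      eq_of_subset_of_ncard_le (range_subset_iff.mpr hf) (by
        rw [ncard_range_of_injective (injective_of_pairwise_disjoint_cycles hf hd), Nat.card_fin]
        exact h.le)
    rw [← hrange]
    rintro _ ⟨i, rfl⟩ _ ⟨j, rfl⟩ hij
    exact hd i j fun h => hij (congrArg f h)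
  · intro hpd
    refine le_antisymm ?_ (csSup_le ⟨0, hzero⟩ fun _ ⟨_, hf, hd⟩ =>
      le_ncard_cycles_of_pairwise_disjoint hf hd)
    let enum := (Finite.equivFin {C | IsCycle src tgt C}).symm
    rw [← Nat.card_coe_set_eq]
    exact le_csSup hbdd ⟨fun i => enum i, fun i => (enum i).2, fun i j hij =>
      hpd (enum i).2 (enum j).2 fun h => hij (enum.injective (Subtype.ext h))⟩

end Packing

end DirectedGraph

theorem stmt3_general {V E : Type} [Fintype E] [DecidableEq V]
    (src tgt : E → V) :
    (∃ L : Submodule ℂ (E → ℂ), zeroLocus (incidenceIdeal ℤ src tgt) = (L : Set (E → ℂ)))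
      ↔ {C : Set E | IsCycle src tgt C}.ncard = cyclePacking src tgt :=
  exists_submodule_eq_zeroLocus_iff.trans ncard_cycles_eq_cyclePacking_iff.symm

theorem stmt3 {V E : Type} [Fintype V] [Fintype E] [DecidableEq V] [DecidableEq E]
    (src tgt : E → V) :
    (∃ L : Submodule ℂ (E → ℂ), zeroLocus (incidenceIdeal ℤ src tgt) = (L : Set (E → ℂ)))
      ↔ {C : Set E | IsCycle src tgt C}.ncard = cyclePacking src tgt :=
  stmt3_general src tgt
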